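/- arXiv:1901.09456 — 2 statements merged into one kernel-verified Lean document; each statement's English description precedes it below -/
import Mathlib

section
/- Let 1 ≤ k ≤ n, let M be an n×n real symmetric positive-definite matrix, and let κ̂ ≥ 1 satisfy κ(M) ≤ κ̂. Then for any two k-element subsets I and J of {1,…,n}, |log det(M_I) − log det(M_J)| ≤ min{k, n−k}·log κ̂; that is, the support of the distribution of Y_k(M) is contained in an interval of length min{k, n−k}·log κ̂. -/
open Matrix Real Finset

/-- The log-determinant of the principal submatrix of `M` indexed by `s`. -/
noncomputable def logMinor {n : ℕ} (M : Matrix (Fin n) (Fin n) ℝ) (s : Finset (Fin n)) : ℝ :=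
  Real.log (M.submatrix (fun i : {x // x ∈ s} => (i : Fin n))
    (fun i : {x // x ∈ s} => (i : Fin n))).det

/-- The mean of `Y_k(M)`, the log-minor of a uniformly random `k`-element index set. -/
noncomputable def meanLM {n : ℕ} (k : ℕ) (M : Matrix (Fin n) (Fin n) ℝ) : ℝ :=
  (∑ s ∈ Finset.powersetCard k (Finset.univ : Finset (Fin n)), logMinor M s) / (n.choose k)

/-- The variance of `Y_k(M)` under the uniform distribution on `k`-element index sets. -/
noncomputable def varLM {n : ℕ} (k : ℕ) (M : Matrix (Fin n) (Fin n) ℝ) : ℝ :=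
  (∑ s ∈ Finset.powersetCard k (Finset.univ : Finset (Fin n)),
    (logMinor M s - meanLM k M) ^ 2) / (n.choose k)

open Classical in
/-- `P(|Y_k(M) - E[Y_k(M)]| ≥ r)` under the uniform distribution on `k`-element index sets. -/
noncomputable def probDevLM {n : ℕ} (k : ℕ) (M : Matrix (Fin n) (Fin n) ℝ) (r : ℝ) : ℝ :=
  (((Finset.powersetCard k (Finset.univ : Finset (Fin n))).filter
      (fun s => r ≤ |logMinor M s - meanLM k M|)).card : ℝ) / (n.choose k)

/-- The largest eigenvalue `λ₁(M)` of a Hermitian matrix. -/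
noncomputable def maxEig {n : ℕ} {M : Matrix (Fin n) (Fin n) ℝ} (hM : M.IsHermitian) : ℝ :=
  ⨆ i, hM.eigenvalues i

/-- The smallest eigenvalue `λₙ(M)` of a Hermitian matrix. -/
noncomputable def minEig {n : ℕ} {M : Matrix (Fin n) (Fin n) ℝ} (hM : M.IsHermitian) : ℝ :=
  ⨅ i, hM.eigenvalues i

/-- The condition number `κ(M) = λ₁(M) / λₙ(M)` of a Hermitian matrix. -/
noncomputable def condNum {n : ℕ} {M : Matrix (Fin n) (Fin n) ℝ} (hM : M.IsHermitian) : ℝ :=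
  maxEig hM / minEig hM

/-
Let `a = λₙ(M)` and `b = λ₁(M)`, so that `a ≤ M ≤ b` in the Loewner order. Principal submatrices
inherit these bounds, so every `k × k` principal minor lies in `[aᵏ, bᵏ]` and the logarithms of two
of them differ by at most `k log (b / a)`. Jacobi's identity `det M_I = det M · det (M⁻¹)_{Iᶜ}`
turns the difference of two `k`-minors of `M` into a difference of two `(n - k)`-minors of `M⁻¹`,
and `b⁻¹ ≤ M⁻¹ ≤ a⁻¹`, which gives the bound `(n - k) log (b / a)` as well.
-/

open scoped MatrixOrder ComplexOrder

namespace Matrix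

theorem det_toBlocks₁₁_eq_det_mul_det_inv_toBlocks₂₂ {m n α : Type*} [Fintype m] [Fintype n]
    [DecidableEq m] [DecidableEq n] [CommRing α] (M : Matrix (m ⊕ n) (m ⊕ n) α)
    (hM : IsUnit M.det) : M.toBlocks₁₁.det = M.det * M⁻¹.toBlocks₂₂.det := by
  -- With `X = M⁻¹`: `M * !![1, X₁₂; 0, X₂₂] = !![M₁₁, 0; M₂₁, 1]`; take determinants.
  set X := M⁻¹
  have hMX : M * X = 1 := mul_nonsing_inv M hM
  rw [← fromBlocks_toBlocks M, ← fromBlocks_toBlocks X, fromBlocks_multiply, ← fromBlocks_one,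
    fromBlocks_inj] at hMX
  have key : M * fromBlocks 1 X.toBlocks₁₂ 0 X.toBlocks₂₂ =
      fromBlocks M.toBlocks₁₁ 0 M.toBlocks₂₁ 1 := by
    rw [← fromBlocks_toBlocks M, fromBlocks_multiply]
    simp [hMX.2.1, hMX.2.2.2]
  simpa [det_fromBlocks_zero₂₁, det_fromBlocks_zero₁₂] using (congrArg det key).symm

theorem det_submatrix_eq_det_mul_det_inv_submatrix_compl {ι α : Type*} [Fintype ι] [DecidableEq ι]
    [CommRing α] (M : Matrix ι ι α) (hM : IsUnit M.det) (s : Finset ι) :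
    (M.submatrix ((↑) : s → ι) (↑)).det = M.det * (M⁻¹.submatrix ((↑) : ↥sᶜ → ι) (↑)).det := by
  let e : s ⊕ {i // i ∉ s} ≃ ι := Equiv.sumCompl (· ∈ s)
  let e' : ↥sᶜ ≃ {i // i ∉ s} := Equiv.subtypeEquivRight fun _ => Finset.mem_compl
  have h := det_toBlocks₁₁_eq_det_mul_det_inv_toBlocks₂₂ (M.submatrix e e)
    (by rwa [det_submatrix_equiv_self])
  rw [det_submatrix_equiv_self, inv_submatrix_equiv,
    ← det_submatrix_equiv_self e' (toBlocks₂₂ _)] at h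
  exact h

section LoewnerBounds

theorem submatrix_le_submatrix {m ι 𝕜 : Type*} [RCLike 𝕜] {A B : Matrix ι ι 𝕜} (h : A ≤ B)
    (e : m → ι) : A.submatrix e e ≤ B.submatrix e e :=
  (le_iff.1 h).submatrix e

variable {m : Type*} [Fintype m] [DecidableEq m]

theorem submatrix_algebraMap {ι : Type*} [Fintype ι] [DecidableEq ι] {e : m → ι}
    (he : Function.Injective e) (a : ℝ) :
    (algebraMap ℝ (Matrix ι ι ℝ) a).submatrix e e = algebraMap ℝ (Matrix m m ℝ) a := by
  ext i j
  simp [algebraMap_matrix_apply, he.eq_iff]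

theorem algebraMap_le_submatrix {ι : Type*} [Fintype ι] [DecidableEq ι] {N : Matrix ι ι ℝ}
    {a : ℝ} (h : algebraMap ℝ _ a ≤ N) {e : m → ι} (he : Function.Injective e) :
    algebraMap ℝ _ a ≤ N.submatrix e e := by
  simpa [submatrix_algebraMap he] using submatrix_le_submatrix h e

theorem submatrix_le_algebraMap {ι : Type*} [Fintype ι] [DecidableEq ι] {N : Matrix ι ι ℝ}
    {b : ℝ} (h : N ≤ algebraMap ℝ _ b) {e : m → ι} (he : Function.Injective e) :
    N.submatrix e e ≤ algebraMap ℝ _ b := by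
  simpa [submatrix_algebraMap he] using submatrix_le_submatrix h e

theorem IsHermitian.algebraMap_le_iff {N : Matrix m m ℝ} (hN : N.IsHermitian) {a : ℝ} :
    algebraMap ℝ _ a ≤ N ↔ ∀ i, a ≤ hN.eigenvalues i := by
  rw [algebraMap_le_iff_le_spectrum hN.isSelfAdjoint, hN.spectrum_real_eq_range_eigenvalues]
  simp

theorem IsHermitian.le_algebraMap_iff {N : Matrix m m ℝ} (hN : N.IsHermitian) {b : ℝ} :
    N ≤ algebraMap ℝ _ b ↔ ∀ i, hN.eigenvalues i ≤ b := by
  rw [le_algebraMap_iff_spectrum_le hN.isSelfAdjoint, hN.spectrum_real_eq_range_eigenvalues]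
  simp

theorem spectrum_nonsing_inv {K : Type*} [Field K] {N : Matrix m m K} (hN : IsUnit N) :
    spectrum K N⁻¹ = (spectrum K N)⁻¹ := by
  have := spectrum.map_inv (𝕜 := K) hN.unit
  rwa [coe_units_inv, IsUnit.unit_spec, eq_comm] at this

variable {N : Matrix m m ℝ} {a b : ℝ}

theorem isHermitian_of_algebraMap_le (h : algebraMap ℝ _ a ≤ N) : N.IsHermitian := by
  have := (IsSelfAdjoint.of_nonneg (sub_nonneg.2 h)).add
    (IsSelfAdjoint.algebraMap (Matrix m m ℝ) (.all a))
  rwa [sub_add_cancel] at this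

theorem pow_card_le_det (ha : 0 ≤ a) (h : algebraMap ℝ _ a ≤ N) :
    a ^ Fintype.card m ≤ N.det := by
  have hN := isHermitian_of_algebraMap_le h
  rw [hN.det_eq_prod_eigenvalues, ← Finset.card_univ, ← Finset.prod_const]
  exact Finset.prod_le_prod (fun _ _ => ha) fun i _ => by simpa using hN.algebraMap_le_iff.1 h i

theorem det_le_pow_card (ha : 0 ≤ a) (haN : algebraMap ℝ _ a ≤ N) (hNb : N ≤ algebraMap ℝ _ b) :
    N.det ≤ b ^ Fintype.card m := by
  have hN := isHermitian_of_algebraMap_le haN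
  rw [hN.det_eq_prod_eigenvalues, ← Finset.card_univ, ← Finset.prod_const]
  exact Finset.prod_le_prod (fun i _ => by simpa using ha.trans (hN.algebraMap_le_iff.1 haN i))
    fun i _ => by simpa using hN.le_algebraMap_iff.1 hNb i

theorem isUnit_of_algebraMap_le (ha : 0 < a) (h : algebraMap ℝ _ a ≤ N) : IsUnit N := by
  rw [← spectrum.zero_notMem_iff ℝ]
  intro h0
  have := (algebraMap_le_iff_le_spectrum (isHermitian_of_algebraMap_le h).isSelfAdjoint).1 h 0 h0
  linarith

theorem nonsing_inv_le_algebraMap_inv (ha : 0 < a) (h : algebraMap ℝ _ a ≤ N) :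
    N⁻¹ ≤ algebraMap ℝ _ a⁻¹ := by
  have hN := isHermitian_of_algebraMap_le h
  rw [le_algebraMap_iff_spectrum_le hN.inv.isSelfAdjoint,
    spectrum_nonsing_inv (isUnit_of_algebraMap_le ha h)]
  intro x hx
  simpa using inv_anti₀ ha ((algebraMap_le_iff_le_spectrum hN.isSelfAdjoint).1 h _ hx)

theorem algebraMap_inv_le_nonsing_inv (ha : 0 < a) (haN : algebraMap ℝ _ a ≤ N)
    (hNb : N ≤ algebraMap ℝ _ b) : algebraMap ℝ _ b⁻¹ ≤ N⁻¹ := by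
  have hN := isHermitian_of_algebraMap_le haN
  rw [algebraMap_le_iff_le_spectrum hN.inv.isSelfAdjoint,
    spectrum_nonsing_inv (isUnit_of_algebraMap_le ha haN)]
  intro x hx
  have hxa := (algebraMap_le_iff_le_spectrum hN.isSelfAdjoint).1 haN _ hx
  have hxb := (le_algebraMap_iff_spectrum_le hN.isSelfAdjoint).1 hNb _ hx
  simpa using inv_anti₀ (ha.trans_le hxa) hxb

end LoewnerBounds

end Matrix

section LogMinor

variable {n : ℕ} {M : Matrix (Fin n) (Fin n) ℝ} {a b : ℝ}

theorem card_mul_log_le_logMinor (ha : 0 < a) (haM : algebraMap ℝ _ a ≤ M)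
    (s : Finset (Fin n)) : #s * log a ≤ logMinor M s := by
  have hs := algebraMap_le_submatrix haM (Subtype.val_injective (p := (· ∈ s)))
  have := pow_card_le_det ha.le hs
  rw [Fintype.card_coe] at this
  rw [logMinor, ← log_pow]
  exact log_le_log (by positivity) this

theorem logMinor_le_card_mul_log (ha : 0 < a) (haM : algebraMap ℝ _ a ≤ M)
    (hMb : M ≤ algebraMap ℝ _ b) (s : Finset (Fin n)) : logMinor M s ≤ #s * log b := by
  have has := algebraMap_le_submatrix haM (Subtype.val_injective (p := (· ∈ s)))
  have hsb := submatrix_le_algebraMap hMb (Subtype.val_injective (p := (· ∈ s)))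
  have hlow := pow_card_le_det ha.le has
  have hup := det_le_pow_card ha.le has hsb
  rw [Fintype.card_coe] at hlow hup
  rw [logMinor, ← log_pow]
  exact log_le_log ((pow_pos ha _).trans_le hlow) hup

theorem abs_logMinor_sub_logMinor_le (ha : 0 < a) (haM : algebraMap ℝ _ a ≤ M)
    (hMb : M ≤ algebraMap ℝ _ b) {k : ℕ} {I J : Finset (Fin n)} (hI : #I = k) (hJ : #J = k) :
    |logMinor M I - logMinor M J| ≤ k * (log b - log a) := by
  have hI₁ := card_mul_log_le_logMinor ha haM I
  have hJ₁ := card_mul_log_le_logMinor ha haM J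
  have hI₂ := logMinor_le_card_mul_log ha haM hMb I
  have hJ₂ := logMinor_le_card_mul_log ha haM hMb J
  rw [hI] at hI₁ hI₂
  rw [hJ] at hJ₁ hJ₂
  rw [abs_le]
  constructor <;> linarith

theorem logMinor_eq_log_det_add_logMinor_nonsing_inv_compl (hM : M.PosDef) (s : Finset (Fin n)) :
    logMinor M s = log M.det + logMinor M⁻¹ sᶜ := by
  rw [logMinor, logMinor,
    det_submatrix_eq_det_mul_det_inv_submatrix_compl M hM.det_pos.ne'.isUnit s,
    log_mul hM.det_pos.ne' (hM.inv.submatrix Subtype.val_injective).det_pos.ne']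

end LogMinor

section ConditionNumber

variable {n : ℕ} {M : Matrix (Fin n) (Fin n) ℝ}

theorem algebraMap_minEig_le (hM : M.IsHermitian) : algebraMap ℝ _ (minEig hM) ≤ M :=
  hM.algebraMap_le_iff.2 fun i => ciInf_le (Set.finite_range _).bddBelow i

theorem le_algebraMap_maxEig (hM : M.IsHermitian) : M ≤ algebraMap ℝ _ (maxEig hM) :=
  hM.le_algebraMap_iff.2 fun i => le_ciSup (Set.finite_range _).bddAbove i

theorem minEig_pos [NeZero n] (hM : M.PosDef) : 0 < minEig hM.1 := by
  obtain ⟨i, hi⟩ := exists_eq_ciInf_of_finite (f := hM.1.eigenvalues)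
  rw [minEig, ← hi]
  exact hM.eigenvalues_pos i

theorem minEig_le_maxEig [NeZero n] (hM : M.IsHermitian) : minEig hM ≤ maxEig hM :=
  (ciInf_le (Set.finite_range _).bddBelow 0).trans (le_ciSup (Set.finite_range _).bddAbove 0)

end ConditionNumber

theorem log_minor_support_bound {n k : ℕ} (hk1 : 1 ≤ k) (hkn : k ≤ n)
    (M : Matrix (Fin n) (Fin n) ℝ) (hM : M.PosDef) (khat : ℝ) (hkhat : 1 ≤ khat)
    (hcond : condNum hM.1 ≤ khat) :
    ∀ I J : Finset (Fin n), I.card = k → J.card = k →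
      |logMinor M I - logMinor M J| ≤ (min k (n - k) : ℝ) * Real.log khat := by
  intro I J hI hJ
  have : NeZero n := ⟨by omega⟩
  set a := minEig hM.1
  set b := maxEig hM.1
  have ha : 0 < a := minEig_pos hM
  have hb : 0 < b := ha.trans_le (minEig_le_maxEig hM.1)
  have haM := algebraMap_minEig_le hM.1
  have hMb := le_algebraMap_maxEig hM.1
  have hspread : log b - log a ≤ log khat := by
    rw [← log_div hb.ne' ha.ne']
    exact log_le_log (div_pos hb ha) hcond
  have hcompl : ∀ s : Finset (Fin n), #s = k → #sᶜ = n - k := fun s hs => by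
    rw [card_compl, hs, Fintype.card_fin]
  have bound_k : |logMinor M I - logMinor M J| ≤ k * log khat :=
    (abs_logMinor_sub_logMinor_le ha haM hMb hI hJ).trans (by gcongr)
  have bound_compl : |logMinor M I - logMinor M J| ≤ (n - k) * log khat := by
    rw [logMinor_eq_log_det_add_logMinor_nonsing_inv_compl hM I,
      logMinor_eq_log_det_add_logMinor_nonsing_inv_compl hM J, add_sub_add_left_eq_sub]
    refine (abs_logMinor_sub_logMinor_le (inv_pos.2 hb) (algebraMap_inv_le_nonsing_inv ha haM hMb)
      (nonsing_inv_le_algebraMap_inv ha haM) (hcompl I hI) (hcompl J hJ)).trans ?_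
    rw [log_inv, log_inv, neg_sub_neg, ← Nat.cast_sub hkn]
    gcongr
  rw [min_mul_of_nonneg _ _ (log_nonneg hkhat)]
  exact le_min bound_k bound_compl
end

section
/- Let n = 2ℓ be even with ℓ ≥ 1, let κ̂ > 1, and let D be the n×n diagonal matrix whose first ℓ diagonal entries equal κ̂ and whose remaining ℓ diagonal entries equal 1. Then for k = 1 and for k = n−1, Var(Y_k(D)) = (log κ̂)²/4; in particular, the bound Var(Y_k(M)) ≤ (1/4)·(min{k, n−k}·log κ̂)² is attained by D for k ∈ {1, n−1}. -/
open Matrix Real Finset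

/-!
For `k = 1` the random variable `Y_1(D) = log D_ii` takes the values `log κ̂` and `0`, each with
probability `1/2`, so its variance is `(log κ̂)² / 4`. For a diagonal matrix,
`log det D_{Iᶜ} = log det D - log det D_I`, and complementation is a bijection between the
`k`-subsets and the `(n - k)`-subsets, so `Y_{n-k}(D)` is a reflection of `Y_k(D)` and has the
same variance.
-/

lemma logMinor_singleton {n : ℕ} (M : Matrix (Fin n) (Fin n) ℝ) (i : Fin n) :
    logMinor M {i} = Real.log (M i i) := by
  rw [logMinor, det_unique]
  rfl

lemma logMinor_diagonal {n : ℕ} {d : Fin n → ℝ} (hd : ∀ i, d i ≠ 0) (s : Finset (Fin n)) :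
    logMinor (diagonal d) s = ∑ i ∈ s, Real.log (d i) := by
  rw [logMinor, submatrix_diagonal _ _ Subtype.val_injective, det_diagonal, Function.comp_def,
    prod_coe_sort s d, Real.log_prod fun i _ => hd i]

lemma logMinor_diagonal_compl {n : ℕ} {d : Fin n → ℝ} (hd : ∀ i, d i ≠ 0) (s : Finset (Fin n)) :
    logMinor (diagonal d) sᶜ = logMinor (diagonal d) univ - logMinor (diagonal d) s := by
  simp only [logMinor_diagonal hd]
  rw [← sum_compl_add_sum s, add_sub_cancel_right]

lemma sum_powersetCard_one {α β : Type*} [AddCommMonoid β] (s : Finset α) (f : Finset α → β) :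
    ∑ t ∈ s.powersetCard 1, f t = ∑ i ∈ s, f {i} := by
  rw [powersetCard_one, sum_map]
  rfl

lemma sum_powersetCard_sub_eq_sum_compl {α β : Type*} [Fintype α] [DecidableEq α]
    [AddCommMonoid β] {n k : ℕ} (hn : Fintype.card α = n) (hk : k ≤ n) (f : Finset α → β) :
    ∑ t ∈ powersetCard (n - k) univ, f t = ∑ t ∈ powersetCard k univ, f tᶜ := by
  subst hn
  refine sum_nbij' compl compl (fun t ht => ?_) (fun t ht => ?_) (fun t _ => compl_compl t)
    (fun t _ => compl_compl t) (fun t _ => by rw [compl_compl])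
  all_goals
    simp only [mem_powersetCard_univ, card_compl] at ht ⊢
    omega

lemma meanLM_one {n : ℕ} (M : Matrix (Fin n) (Fin n) ℝ) :
    meanLM 1 M = (∑ i, Real.log (M i i)) / n := by
  simp only [meanLM, sum_powersetCard_one, logMinor_singleton, Nat.choose_one_right]

lemma varLM_one {n : ℕ} (M : Matrix (Fin n) (Fin n) ℝ) :
    varLM 1 M = (∑ i, (Real.log (M i i) - meanLM 1 M) ^ 2) / n := by
  simp only [varLM, sum_powersetCard_one, logMinor_singleton, Nat.choose_one_right]

section Complement

variable {n k : ℕ} {d : Fin n → ℝ}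

lemma meanLM_diagonal_sub (hd : ∀ i, d i ≠ 0) (hk : k ≤ n) :
    meanLM (n - k) (diagonal d) = logMinor (diagonal d) univ - meanLM k (diagonal d) := by
  have hchoose : (n.choose k : ℝ) ≠ 0 := by exact_mod_cast (Nat.choose_pos hk).ne'
  simp only [meanLM, sum_powersetCard_sub_eq_sum_compl (Fintype.card_fin n) hk,
    logMinor_diagonal_compl hd, sum_sub_distrib, sum_const, card_powersetCard, card_univ,
    Fintype.card_fin, nsmul_eq_mul, Nat.choose_symm hk]
  field_simp

lemma varLM_diagonal_sub (hd : ∀ i, d i ≠ 0) (hk : k ≤ n) :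
    varLM (n - k) (diagonal d) = varLM k (diagonal d) := by
  simp only [varLM, sum_powersetCard_sub_eq_sum_compl (Fintype.card_fin n) hk,
    logMinor_diagonal_compl hd, meanLM_diagonal_sub hd hk, sub_sub_sub_cancel_left,
    Nat.choose_symm hk]
  congr 1
  exact sum_congr rfl fun s _ => by ring

end Complement

theorem support_variance_bound_sharp {ℓ : ℕ} (hℓ : 1 ≤ ℓ) (khat : ℝ) (hkhat : 1 < khat)
    (D : Matrix (Fin (2 * ℓ)) (Fin (2 * ℓ)) ℝ)
    (hD : D = Matrix.diagonal (fun i : Fin (2 * ℓ) => if (i : ℕ) < ℓ then khat else 1)) :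
    varLM 1 D = (Real.log khat) ^ 2 / 4 ∧
      varLM (2 * ℓ - 1) D = (Real.log khat) ^ 2 / 4 := by
  set d : Fin (2 * ℓ) → ℝ := fun i => if (i : ℕ) < ℓ then khat else 1
  set c := Real.log khat
  have hd : ∀ i, d i ≠ 0 := fun i => by dsimp only [d]; split_ifs <;> linarith
  have hlog : ∀ i, Real.log (D i i) = if (i : ℕ) < ℓ then c else 0 := fun i => by
    rw [hD, diagonal_apply_eq, apply_ite Real.log, Real.log_one]
  have hn : (2 * ℓ : ℝ) ≠ 0 := by positivity
  have hmean : meanLM 1 D = c / 2 := by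
    rw [meanLM_one]
    simp only [hlog, sum_ite, sum_const, smul_zero, add_zero, Fin.card_filter_val_lt,
      nsmul_eq_mul, min_eq_right (by omega : ℓ ≤ 2 * ℓ)]
    push_cast
    field_simp
  have hvar : varLM 1 D = c ^ 2 / 4 := by
    have hdev : ∀ i, (Real.log (D i i) - c / 2) ^ 2 = c ^ 2 / 4 := fun i => by
      rw [hlog]; split_ifs <;> ring
    rw [varLM_one, hmean]
    simp only [hdev, sum_const, card_univ, Fintype.card_fin, nsmul_eq_mul]
    push_cast
    field_simp
  refine ⟨hvar, ?_⟩
  rw [hD, varLM_diagonal_sub hd (by omega), ← hD, hvar]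
end
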